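/- arXiv:2201.07057 — 3 statements merged into one kernel-verified Lean document; each statement's English description precedes it below -/
import Mathlib

section
/- Let α > 2 and u_α(x) = ∫₀ˣ √(((α-2)/2 · t² + 1)^{2/(α-2)} − 1) dt. Then u_α satisfies the differential equation u_α''(x)·u_α'(x)/(x·(1+u_α'(x)²)²) = (1+u_α'(x)²)^{-α/2} for all x > 0. -/
/-!
With `B(t) = (α-2)/2 · t² + 1` and `c = 2/(α-2)`, the integrand `f = √(B^c - 1)` is
continuous, so `u' = f` and `1 + u'² = B^c`. Differentiating `f² = B^c - 1` gives
`u'' u' = c B^(c-1) B' / 2 = x B^(c-1)`, hence the left side equals `B^(c-1-2c) = B^(-(c+1))`,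
and `c + 1 = cα/2` turns this into `(B^c)^(-α/2)`.
-/

theorem deriv_sqrt_sub_one_mul_sqrt_sub_one {G : ℝ → ℝ} {G' x : ℝ} (hG : HasDerivAt G G' x)
    (h1 : 1 < G x) :
    deriv (fun t => √(G t - 1)) x * √(G x - 1) = G' / 2 := by
  have hpos : 0 < G x - 1 := sub_pos.mpr h1
  rw [((hG.sub_const 1).sqrt hpos.ne').deriv]
  field_simp [(Real.sqrt_pos.mpr hpos).ne']

theorem rpow_sub_one_div_rpow_sq {b c α : ℝ} (hb : 0 < b) (hc : c * (α - 2) = 2) :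
    b ^ (c - 1) / (b ^ c) ^ 2 = (b ^ c) ^ (-(α / 2)) := by
  rw [← Real.rpow_mul_natCast hb.le, ← Real.rpow_sub hb, ← Real.rpow_mul hb.le]
  congr 1
  push_cast
  linear_combination hc / 2

noncomputable section

namespace ProfileAlpha

variable {α : ℝ}

def base (α t : ℝ) : ℝ := (α - 2) / 2 * t ^ 2 + 1

def slope (α t : ℝ) : ℝ := √(base α t ^ (2 / (α - 2)) - 1)

theorem one_le_base (hα : 2 ≤ α) (t : ℝ) : 1 ≤ base α t := by
  have : 0 ≤ (α - 2) / 2 * t ^ 2 := by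
    have : 0 ≤ α - 2 := by linarith
    positivity
  unfold base
  linarith

theorem one_lt_base (hα : 2 < α) {t : ℝ} (ht : t ≠ 0) : 1 < base α t := by
  have : 0 < (α - 2) / 2 * t ^ 2 := by
    have : 0 < α - 2 := by linarith
    positivity
  unfold base
  linarith

theorem base_pos (hα : 2 ≤ α) (t : ℝ) : 0 < base α t :=
  zero_lt_one.trans_le (one_le_base hα t)

theorem hasDerivAt_base (t : ℝ) : HasDerivAt (base α) ((α - 2) * t) t := by
  have := ((hasDerivAt_pow 2 t).const_mul ((α - 2) / 2)).add_const 1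
  exact this.congr_deriv (by ring)

theorem continuous_slope (hα : 2 ≤ α) : Continuous (slope α) := by
  have hbase : Continuous (base α) := by unfold base; fun_prop
  exact ((hbase.rpow_const fun t => Or.inl (base_pos hα t).ne').sub continuous_const).sqrt

theorem one_add_slope_sq (hα : 2 ≤ α) (t : ℝ) :
    1 + slope α t ^ 2 = base α t ^ (2 / (α - 2)) := by
  have : 1 ≤ base α t ^ (2 / (α - 2)) :=
    Real.one_le_rpow (one_le_base hα t) (div_nonneg zero_le_two (by linarith))
  rw [slope, Real.sq_sqrt (by linarith)]
  ring

theorem deriv_slope_mul_slope (hα : 2 < α) {x : ℝ} (hx : x ≠ 0) :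
    deriv (slope α) x * slope α x = x * base α x ^ (2 / (α - 2) - 1) := by
  have hB := (hasDerivAt_base (α := α) x).rpow_const (p := 2 / (α - 2))
    (Or.inl (base_pos hα.le x).ne')
  have hc : 2 / (α - 2) * (α - 2) = 2 := div_mul_cancel₀ _ (by linarith)
  calc deriv (slope α) x * slope α x
      = (α - 2) * x * (2 / (α - 2)) * base α x ^ (2 / (α - 2) - 1) / 2 :=
        deriv_sqrt_sub_one_mul_sqrt_sub_one hB
          (Real.one_lt_rpow (one_lt_base hα hx) (div_pos two_pos (by linarith)))
    _ = x * base α x ^ (2 / (α - 2) - 1) := by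
        linear_combination x * base α x ^ (2 / (α - 2) - 1) / 2 * hc

end ProfileAlpha

end

/-- For `α > 2`, the profile function
`u_α(x) = ∫₀ˣ √(((α-2)/2·t² + 1)^(2/(α-2)) − 1) dt` satisfies the prescribed Gauss curvature
equation `u''u'/(x(1+u'²)²) = (1+u'²)^(-α/2)` for all `x > 0`, i.e. the rotated graph of `u_α`
is a `𝔎`-surface for `𝔎(y) = y^α`. -/
theorem profile_alpha_gt_two_ode (α : ℝ) (hα : 2 < α) (u : ℝ → ℝ)
    (hu : ∀ x : ℝ, u x =
      ∫ t in (0:ℝ)..x, Real.sqrt (((α - 2) / 2 * t ^ 2 + 1) ^ (2 / (α - 2)) - 1)) :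
    ∀ x : ℝ, 0 < x →
      deriv (deriv u) x * deriv u x / (x * (1 + (deriv u x) ^ 2) ^ 2) =
        (1 + (deriv u x) ^ 2) ^ (-(α / 2)) := by
  intro x hx
  have hu' : deriv u = ProfileAlpha.slope α := by
    funext y
    rw [show u = fun y => ∫ t in (0:ℝ)..y, ProfileAlpha.slope α t from funext hu]
    exact (ProfileAlpha.continuous_slope hα.le).deriv_integral _ 0 y
  rw [hu', ProfileAlpha.deriv_slope_mul_slope hα hx.ne', ProfileAlpha.one_add_slope_sq hα.le,
    mul_div_mul_left _ _ hx.ne']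
  exact rpow_sub_one_div_rpow_sq (ProfileAlpha.base_pos hα.le x)
    (div_mul_cancel₀ _ (by linarith))
end

section
/- Consider the planar autonomous system x'(s) = cos θ(s), θ'(s) = x(s)·𝔎(cos θ(s))/sin θ(s) on Θ = [0,∞)×(0,π), where 𝔎 ∈ C¹([-1,1]). Suppose a solution γ(s) = (x(s), θ(s)) satisfies x(s) → ∞ and θ(s) → θ₀ ∈ [0,π] as s → ∞, with θ(s) eventually monotone. Then 𝔎(cos θ₀) = 0. -/
open Real Filter

/-- If an orbit `γ(s) = (x(s), θ(s))` of the profile system `x' = cos θ`,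
`θ' = x·𝔎(cos θ)/sin θ` on `Θ = [0,∞)×(0,π)` satisfies `x(s) → ∞` and `θ(s) → θ₀ ∈ [0,π]`
as `s → ∞`, with `θ` eventually monotone, then `𝔎(cos θ₀) = 0`. -/
theorem orbit_escapes_forces_K_vanish (𝔎 : ℝ → ℝ)
    (h𝔎 : ContDiffOn ℝ 1 𝔎 (Set.Icc (-1) 1))
    (a : ℝ) (x θ : ℝ → ℝ)
    (hsol : ∀ s ∈ Set.Ici a, 0 ≤ x s ∧ θ s ∈ Set.Ioo 0 π ∧
      HasDerivAt x (Real.cos (θ s)) s ∧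
      HasDerivAt θ (x s * 𝔎 (Real.cos (θ s)) / Real.sin (θ s)) s)
    (θ₀ : ℝ) (hθ₀ : θ₀ ∈ Set.Icc 0 π)
    (hx : Tendsto x atTop atTop) (hθ : Tendsto θ atTop (nhds θ₀))
    (hmono : ∃ b : ℝ, MonotoneOn θ (Set.Ici b) ∨ AntitoneOn θ (Set.Ici b)) :
    𝔎 (Real.cos θ₀) = 0 := by
  by_contra hK
  set K := 𝔎 (Real.cos θ₀) with hKdef
  have hmem : Real.cos θ₀ ∈ Set.Icc (-1:ℝ) 1 :=
    ⟨Real.neg_one_le_cos θ₀, Real.cos_le_one θ₀⟩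
  have hcos : Tendsto (fun s => Real.cos (θ s)) atTop (nhds (Real.cos θ₀)) :=
    (Real.continuous_cos.tendsto _).comp hθ
  have hKc : Tendsto (fun s => 𝔎 (Real.cos (θ s))) atTop (nhds K) := by
    refine (h𝔎.continuousOn _ hmem).tendsto.comp
      (tendsto_nhdsWithin_iff.mpr ⟨hcos, Eventually.of_forall fun s =>
        ⟨Real.neg_one_le_cos _, Real.cos_le_one _⟩⟩)
  rcases lt_or_gt_of_ne hK with hneg | hpos
  · -- K < 0 case
    have h1 : ∀ᶠ s in atTop, 𝔎 (Real.cos (θ s)) < K / 2 :=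
      hKc.eventually (eventually_lt_nhds (by linarith))
    have h2 : ∀ᶠ s in atTop, -2 / K ≤ x s := hx.eventually_ge_atTop _
    have h3 : ∀ᶠ s in atTop, a ≤ s := eventually_ge_atTop a
    obtain ⟨c, hc⟩ := eventually_atTop.mp ((h1.and h2).and h3)
    have key : ∀ s ∈ Set.Ici c, deriv θ s ≤ (-1 : ℝ) := by
      intro s hs
      obtain ⟨⟨hk, hx2⟩, ha⟩ := hc s hs
      obtain ⟨hx0, hθs, _, hdθ⟩ := hsol s ha
      rw [hdθ.deriv]
      have sinpos : 0 < Real.sin (θ s) := Real.sin_pos_of_pos_of_lt_pi hθs.1 hθs.2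
      rw [div_le_iff₀ sinpos]
      have h4 : x s * 𝔎 (Real.cos (θ s)) ≤ x s * (K / 2) :=
        mul_le_mul_of_nonneg_left hk.le hx0
      have h5 : x s * (K / 2) ≤ (-2 / K) * (K / 2) :=
        mul_le_mul_of_nonpos_right hx2 (by linarith)
      have h6 : (-2 / K) * (K / 2) = -1 := by field_simp
      have h7 : Real.sin (θ s) ≤ 1 := Real.sin_le_one _
      nlinarith
    have hcont : ContinuousOn θ (Set.Ici c) := fun s hs =>
      ((hsol s ((hc s hs).2)).2.2.2.continuousAt).continuousWithinAt
    have hdiff : DifferentiableOn ℝ θ (interior (Set.Ici c)) := fun s hs =>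
      ((hsol s ((hc s (interior_subset hs)).2)).2.2.2.differentiableAt).differentiableWithinAt
    have hmvt := (convex_Ici c).image_sub_le_mul_sub_of_deriv_le hcont hdiff
      (fun s hs => key s (interior_subset hs)) c Set.self_mem_Ici (c + π + 1)
      (by simp only [Set.mem_Ici]; linarith [Real.pi_pos]) (by linarith [Real.pi_pos])
    have hθc : θ c ∈ Set.Ioo 0 π := (hsol c (hc c le_rfl).2).2.1
    have hθs : θ (c + π + 1) ∈ Set.Ioo 0 π :=
      (hsol _ (hc _ (by linarith [Real.pi_pos])).2).2.1
    nlinarith [hθc.1, hθc.2, hθs.1, hθs.2]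
  · -- K > 0 case
    have h1 : ∀ᶠ s in atTop, K / 2 < 𝔎 (Real.cos (θ s)) :=
      hKc.eventually (eventually_gt_nhds (by linarith))
    have h2 : ∀ᶠ s in atTop, 2 / K ≤ x s := hx.eventually_ge_atTop _
    have h3 : ∀ᶠ s in atTop, a ≤ s := eventually_ge_atTop a
    obtain ⟨c, hc⟩ := eventually_atTop.mp ((h1.and h2).and h3)
    have key : ∀ s ∈ Set.Ici c, (1 : ℝ) ≤ deriv θ s := by
      intro s hs
      obtain ⟨⟨hk, hx2⟩, ha⟩ := hc s hs
      obtain ⟨hx0, hθs, _, hdθ⟩ := hsol s ha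
      rw [hdθ.deriv]
      have sinpos : 0 < Real.sin (θ s) := Real.sin_pos_of_pos_of_lt_pi hθs.1 hθs.2
      rw [le_div_iff₀ sinpos]
      have h4 : (2 / K) * (K / 2) ≤ x s * 𝔎 (Real.cos (θ s)) := by
        apply mul_le_mul hx2 hk.le (by positivity)
        exact le_trans (by positivity) hx2
      have h6 : (2 / K) * (K / 2) = 1 := by field_simp
      have h7 : Real.sin (θ s) ≤ 1 := Real.sin_le_one _
      nlinarith
    have hcont : ContinuousOn θ (Set.Ici c) := fun s hs =>
      ((hsol s ((hc s hs).2)).2.2.2.continuousAt).continuousWithinAt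
    have hdiff : DifferentiableOn ℝ θ (interior (Set.Ici c)) := fun s hs =>
      ((hsol s ((hc s (interior_subset hs)).2)).2.2.2.differentiableAt).differentiableWithinAt
    have hmvt := (convex_Ici c).mul_sub_le_image_sub_of_le_deriv hcont hdiff
      (fun s hs => key s (interior_subset hs)) c Set.self_mem_Ici (c + π + 1)
      (by simp only [Set.mem_Ici]; linarith [Real.pi_pos]) (by linarith [Real.pi_pos])
    have hθc : θ c ∈ Set.Ioo 0 π := (hsol c (hc c le_rfl).2).2.1
    have hθs : θ (c + π + 1) ∈ Set.Ioo 0 π :=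
      (hsol _ (hc _ (by linarith [Real.pi_pos])).2).2.1
    nlinarith [hθc.1, hθc.2, hθs.1, hθs.2]
end

section
/- Let 𝔎 ∈ C¹([-1,1]) satisfy 𝔎 ≤ c₀ < 0 for some constant c₀ < 0. Let γ(s) = (x(s), θ(s)) be the maximal solution of x' = cos θ, θ' = x𝔎(cos θ)/sin θ with γ(0) = (x₀, π/2), x₀ > 0, defined for s in a maximal interval. Then for s > 0 in the domain, x(s) is strictly increasing and θ(s) is strictly decreasing, and θ(s) cannot converge to any θ₀ ∈ (0, π/2] while x(s) → ∞; i.e., the orbit reaches θ → 0 with x bounded: there exist s₀ ∈ (0,∞] and x₀¹ ∈ (x₀, ∞) with θ(s) → 0 and x(s) → x₀¹ as s → s₀. -/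
/-!
As long as `x > 0`, the equation `θ' = x 𝔎(cos θ) / sin θ` with `𝔎 < 0` makes `θ` decrease from
`π / 2`, hence `cos θ > 0` and `x` increases; a continuous-induction argument shows that `x` never
gets back to `0`, which gives the monotonicity. Then `x ≥ x₀` forces `θ' ≤ x₀ c₀ < 0`, so the
solution cannot exist for all time and lives on some `[0, b)`. There `x` (of speed at most `1`)
and `θ` are monotone and bounded, so they converge as `s → b⁻`. If the limit of `θ` were positive,
the limit point would lie in the open region where the vector field is `C¹`, and Picard–Lindelöf
together with backward uniqueness would continue the solution beyond `b`, contradicting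
maximality.
-/

open Real Filter Set Topology

theorem ContinuousOn.forall_pos_of_forall_Ico_pos {f : ℝ → ℝ} {a b : ℝ}
    (hf : ContinuousOn f (Icc a b))
    (hstep : ∀ t ∈ Icc a b, (∀ u ∈ Ico a t, 0 < f u) → 0 < f t) :
    ∀ t ∈ Icc a b, 0 < f t := by
  by_contra! ⟨t, ht, hft⟩
  have hclosed : IsClosed (Icc a b ∩ f ⁻¹' Iic 0) :=
    hf.preimage_isClosed_of_isClosed isClosed_Icc isClosed_Iic
  obtain ⟨T, ⟨hT, hfT⟩, hleast⟩ :=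
    (isCompact_Icc.of_isClosed_subset hclosed inter_subset_left).exists_isLeast ⟨t, ht, hft⟩
  refine (hstep T hT fun u hu => ?_).not_ge hfT
  by_contra! hfu
  exact (hleast ⟨⟨hu.1, hu.2.le.trans hT.2⟩, hfu⟩).not_gt hu.2

theorem image_sub_le_mul_sub_of_hasDerivAt_le {f f' : ℝ → ℝ} {D : Set ℝ} (hD : Convex ℝ D)
    (hf : ∀ t ∈ D, HasDerivAt f (f' t) t) {C : ℝ} (hC : ∀ t ∈ D, f' t ≤ C) {s t : ℝ}
    (hs : s ∈ D) (ht : t ∈ D) (hst : s ≤ t) : f t - f s ≤ C * (t - s) :=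
  hD.image_sub_le_mul_sub_of_deriv_le (fun u hu => (hf u hu).continuousAt.continuousWithinAt)
    (fun u hu => (hf u (interior_subset hu)).differentiableAt.differentiableWithinAt)
    (fun u hu => (hf u (interior_subset hu)).deriv ▸ hC u (interior_subset hu)) s hs t ht hst

theorem StrictMonoOn.exists_lt_tendsto_nhdsLT {f : ℝ → ℝ} {a b : ℝ} (hab : a < b)
    (hf : StrictMonoOn f (Ico a b)) (hbdd : BddAbove (f '' Ico a b)) :
    ∃ l, f a < l ∧ Tendsto f (𝓝[<] b) (𝓝 l) := by
  obtain ⟨m, ham, hmb⟩ := exists_between hab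
  have hbdd' : BddAbove (f '' Ioo a b) := hbdd.mono (image_mono Ioo_subset_Ico_self)
  exact ⟨_, (hf ⟨le_rfl, hab⟩ ⟨ham.le, hmb⟩ ham).trans_le (le_csSup hbdd' ⟨m, ⟨ham, hmb⟩, rfl⟩),
    (hf.mono Ioo_subset_Ico_self).monotoneOn.tendsto_nhdsWithin_Ioo_left ⟨m, ham, hmb⟩ hbdd'⟩

section ODE

variable {E : Type*} [NormedAddCommGroup E] [NormedSpace ℝ E]

theorem ODE_solution_eventuallyEq_nhdsLT_of_tendsto {v : E → E} {γ f : ℝ → E} {b : ℝ} {p : E}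
    {K : NNReal} {s : Set E} (hs : s ∈ 𝓝 p) (hv : LipschitzOnWith K v s)
    (hγ : ∀ᶠ t in 𝓝[<] b, HasDerivAt γ (v (γ t)) t) (hγp : Tendsto γ (𝓝[<] b) (𝓝 p))
    (hf : ∀ᶠ t in 𝓝 b, HasDerivAt f (v (f t)) t) (hfb : f b = p) :
    γ =ᶠ[𝓝[<] b] f := by
  classical
  have hfs : ∀ᶠ t in 𝓝 b, HasDerivAt f (v (f t)) t ∧ f t ∈ s :=
    hf.and (hf.self_of_nhds.continuousAt.eventually_mem (hfb ▸ hs))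
  obtain ⟨a, hab, hsub⟩ := mem_nhdsLT_iff_exists_Ioo_subset.1
    (hγ.and ((hγp.eventually_mem hs).and (hfs.filter_mono nhdsWithin_le_nhds)))
  replace hab : a < b := hab
  obtain ⟨δ, hδ, hδsub⟩ := Metric.eventually_nhds_iff_ball.1 hfs
  obtain ⟨a', ha', ha'b⟩ := exists_between (max_lt hab (sub_lt_self b hδ))
  rw [max_lt_iff] at ha'
  have hball : Icc a' b ⊆ Metric.ball b δ := fun t ht => by
    rw [Real.ball_eq_Ioo]
    exact ⟨ha'.2.trans_le ht.1, ht.2.trans_lt (lt_add_of_pos_right b hδ)⟩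
  -- `F` is `γ` completed by its limit at `b`, which makes it a solution on `(a, b]`.
  set F := Function.update γ b p
  have hFγ : ∀ t < b, F =ᶠ[𝓝 t] γ := fun t ht =>
    eventuallyEq_of_mem (Iio_mem_nhds ht) fun u hu => Function.update_of_ne hu.ne _ _
  have hFb : F b = p := Function.update_self _ _ _
  have hFcont : ∀ u : Set ℝ, u ⊆ Iic b → ContinuousWithinAt F u b := fun u hu =>
    continuousWithinAt_update_same.2 <| hγp.mono_left <| nhdsWithin_mono _ fun t ht =>
      (hu ht.1).lt_of_ne ht.2
  have hFder : ∀ t ∈ Ioo a b, HasDerivAt F (v (F t)) t := fun t ht => by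
    rw [(hFγ t ht.2).eq_of_nhds]
    exact (hsub ht).1.congr_of_eventuallyEq (hFγ t ht.2)
  have hFderb : HasDerivWithinAt F (v p) (Iic b) b := by
    refine hasDerivWithinAt_Iic_of_tendsto_deriv (fun t ht => (hFder t ht).differentiableAt
      |>.differentiableWithinAt) (hFcont _ fun t ht => ht.2.le) (Ioo_mem_nhdsLT hab) ?_
    refine ((hv.continuousOn.continuousAt hs).tendsto.comp hγp).congr' ?_
    filter_upwards [Ioo_mem_nhdsLT hab] with t ht
    rw [(hFder t ht).deriv, Function.comp_apply, (hFγ t ht.2).eq_of_nhds]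
  suffices EqOn F f (Icc a' b) from eventuallyEq_of_mem (Ioo_mem_nhdsLT ha'b) fun t ht =>
    (hFγ t ht.2).eq_of_nhds.symm.trans (this (Ioo_subset_Icc_self ht))
  refine ODE_solution_unique_of_mem_Icc_left (v := fun _ => v) (s := fun _ => s) (fun _ _ => hv)
    (fun t ht => ?_) (fun t ht => ?_) (fun t ht => ?_)
    (fun t ht => (hδsub _ (hball ht)).1.continuousAt.continuousWithinAt)
    (fun t ht => (hδsub _ (hball (Ioc_subset_Icc_self ht))).1.hasDerivWithinAt)
    (fun t ht => (hδsub _ (hball (Ioc_subset_Icc_self ht))).2) (hFb.trans hfb.symm)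
  all_goals rcases ht.2.lt_or_eq with htb | rfl
  · exact (hFder t ⟨ha'.1.trans_le ht.1, htb⟩).continuousAt.continuousWithinAt
  · exact hFcont _ fun u hu => hu.2
  · exact (hFder t ⟨ha'.1.trans ht.1, htb⟩).hasDerivWithinAt
  · exact hFb ▸ hFderb
  · rw [(hFγ t htb).eq_of_nhds]
    exact (hsub ⟨ha'.1.trans ht.1, htb⟩).2.1
  · exact hFb ▸ mem_of_mem_nhds hs

theorem exists_extension_of_tendsto [CompleteSpace E] {v : E → E} {γ : ℝ → E} {a b : ℝ} {p : E}
    (hv : ContDiffAt ℝ 1 v p) (hab : a < b) (hγ : ∀ t ∈ Ioo a b, HasDerivAt γ (v (γ t)) t)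
    (hγp : Tendsto γ (𝓝[<] b) (𝓝 p)) :
    ∃ c > b, ∃ γ' : ℝ → E, EqOn γ' γ (Iio b) ∧ γ' b = p ∧
      ∀ t ∈ Ioo a c, HasDerivAt γ' (v (γ' t)) t := by
  obtain ⟨K, s, hs, hLip⟩ := hv.exists_lipschitzOnWith
  obtain ⟨f, hfb, ε, hε, hf⟩ :=
    hv.exists_forall_mem_closedBall_exists_eq_forall_mem_Ioo_hasDerivAt₀ b
  have hγf := ODE_solution_eventuallyEq_nhdsLT_of_tendsto hs hLip
    (eventually_mem_set.2 (Ioo_mem_nhdsLT hab) |>.mono hγ) hγp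
    (eventually_mem_set.2 (Ioo_mem_nhds (sub_lt_self b hε) (lt_add_of_pos_right b hε)) |>.mono hf)
    hfb
  obtain ⟨a', ha'b, hγf⟩ := mem_nhdsLT_iff_exists_Ioo_subset.1 hγf
  set γ' : ℝ → E := fun t => if t < b then γ t else f t
  have hγ'f : EqOn γ' f (Ioo (max a' (b - ε)) (b + ε)) := fun t ht => by
    by_cases htb : t < b
    · simp only [γ', if_pos htb]
      exact hγf ⟨(le_max_left _ _).trans_lt ht.1, htb⟩
    · simp only [γ', if_neg htb]
  refine ⟨b + ε, lt_add_of_pos_right b hε, γ', fun t ht => if_pos ht, by simp [γ', hfb],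
    fun t ht => ?_⟩
  by_cases htb : t < b
  · have hγ'γ : γ' =ᶠ[𝓝 t] γ := eventuallyEq_of_mem (Iio_mem_nhds htb) fun u hu => if_pos hu
    rw [hγ'γ.eq_of_nhds]
    exact (hγ t ⟨ht.1, htb⟩).congr_of_eventuallyEq hγ'γ
  · have ht' : t ∈ Ioo (max a' (b - ε)) (b + ε) :=
      ⟨(max_lt ha'b (sub_lt_self b hε)).trans_le (not_lt.1 htb), ht.2⟩
    rw [hγ'f ht']
    exact (hf t ⟨(le_max_right _ _).trans_lt ht'.1, ht'.2⟩).congr_of_eventuallyEq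
      (eventuallyEq_of_mem (isOpen_Ioo.mem_nhds ht') hγ'f)

end ODE

noncomputable def profileField (𝔎 : ℝ → ℝ) (p : ℝ × ℝ) : ℝ × ℝ :=
  (cos p.2, p.1 * 𝔎 (cos p.2) / sin p.2)

theorem contDiffAt_profileField {𝔎 : ℝ → ℝ} (h𝔎 : ContDiffOn ℝ 1 𝔎 (Icc (-1) 1)) {p : ℝ × ℝ}
    (hp : p.2 ∈ Ioo 0 π) : ContDiffAt ℝ 1 (profileField 𝔎) p := by
  have hcos : cos p.2 ∈ Ioo (-1) 1 := by
    constructor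
    · simpa using cos_lt_cos_of_nonneg_of_le_pi hp.1.le le_rfl hp.2
    · simpa using cos_lt_cos_of_nonneg_of_le_pi le_rfl hp.2.le hp.1
  have h𝔎p : ContDiffAt ℝ 1 𝔎 (cos p.2) := h𝔎.contDiffAt (Icc_mem_nhds hcos.1 hcos.2)
  exact contDiffAt_snd.cos.prodMk <| (contDiffAt_fst.mul (h𝔎p.comp p contDiffAt_snd.cos)).div
    contDiffAt_snd.sin (sin_pos_of_pos_of_lt_pi hp.1 hp.2).ne'

def IsInitialInterval (D : Set ℝ) : Prop :=
  D = Ici 0 ∨ ∃ b : ℝ, 0 < b ∧ D = Ico 0 b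

theorem IsInitialInterval.Icc_subset {D : Set ℝ} (hD : IsInitialInterval D) {t : ℝ} (ht : t ∈ D) :
    Icc 0 t ⊆ D := by
  rcases hD with rfl | ⟨b, -, rfl⟩
  · exact fun u hu => hu.1
  · exact Icc_subset_Ico_right ht.2

theorem IsInitialInterval.nonneg {D : Set ℝ} (hD : IsInitialInterval D) {t : ℝ} (ht : t ∈ D) :
    0 ≤ t := by
  rcases hD with rfl | ⟨b, -, rfl⟩
  exacts [ht, ht.1]

def IsProfileSolution (𝔎 x θ : ℝ → ℝ) (D : Set ℝ) : Prop :=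
  ∀ s ∈ D, 0 ≤ x s ∧ θ s ∈ Ioo 0 π ∧ HasDerivAt x (cos (θ s)) s ∧
    HasDerivAt θ (x s * 𝔎 (cos (θ s)) / sin (θ s)) s

namespace IsProfileSolution

variable {𝔎 x θ : ℝ → ℝ}

theorem mono {D D' : Set ℝ} (hsol : IsProfileSolution 𝔎 x θ D) (hD : D' ⊆ D) :
    IsProfileSolution 𝔎 x θ D' :=
  fun s hs => hsol s (hD hs)

theorem strictAntiOn_theta {a b : ℝ} (hsol : IsProfileSolution 𝔎 x θ (Icc a b))
    (hK : ∀ y ∈ Icc (-1 : ℝ) 1, 𝔎 y < 0) (hx : ∀ t ∈ Ioo a b, 0 < x t) :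
    StrictAntiOn θ (Icc a b) := by
  refine strictAntiOn_of_deriv_neg (convex_Icc a b)
    (fun t ht => (hsol t ht).2.2.2.continuousAt.continuousWithinAt) fun t ht => ?_
  rw [interior_Icc] at ht
  obtain ⟨-, hθ, -, hθ'⟩ := hsol t (Ioo_subset_Icc_self ht)
  rw [hθ'.deriv]
  exact div_neg_of_neg_of_pos (mul_neg_of_pos_of_neg (hx t ht)
    (hK _ ⟨neg_one_le_cos _, cos_le_one _⟩)) (sin_pos_of_pos_of_lt_pi hθ.1 hθ.2)

theorem strictMonoOn_x {a b : ℝ} (hsol : IsProfileSolution 𝔎 x θ (Icc a b))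
    (hθ : ∀ t ∈ Ioo a b, θ t < π / 2) : StrictMonoOn x (Icc a b) := by
  refine strictMonoOn_of_deriv_pos (convex_Icc a b)
    (fun t ht => (hsol t ht).2.2.1.continuousAt.continuousWithinAt) fun t ht => ?_
  rw [interior_Icc] at ht
  obtain ⟨-, hθt, hx', -⟩ := hsol t (Ioo_subset_Icc_self ht)
  rw [hx'.deriv]
  exact cos_pos_of_mem_Ioo ⟨by linarith [hθt.1, pi_pos], hθ t ht⟩

theorem strictMonoOn_strictAntiOn_Icc {T : ℝ} (hsol : IsProfileSolution 𝔎 x θ (Icc 0 T))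
    (hK : ∀ y ∈ Icc (-1 : ℝ) 1, 𝔎 y < 0) (hθ0 : θ 0 = π / 2) (hx : ∀ t ∈ Ioo 0 T, 0 < x t) :
    StrictMonoOn x (Icc 0 T) ∧ StrictAntiOn θ (Icc 0 T) := by
  have hθ := hsol.strictAntiOn_theta hK hx
  refine ⟨hsol.strictMonoOn_x fun t ht => ?_, hθ⟩
  rw [← hθ0]
  exact hθ ⟨le_rfl, ht.1.le.trans ht.2.le⟩ ⟨ht.1.le, ht.2.le⟩ ht.1

theorem pos_x_Icc {T : ℝ} (hsol : IsProfileSolution 𝔎 x θ (Icc 0 T))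
    (hK : ∀ y ∈ Icc (-1 : ℝ) 1, 𝔎 y < 0) (hx0 : 0 < x 0) (hθ0 : θ 0 = π / 2) :
    ∀ t ∈ Icc 0 T, 0 < x t := by
  refine ContinuousOn.forall_pos_of_forall_Ico_pos
    (fun t ht => (hsol t ht).2.2.1.continuousAt.continuousWithinAt) fun t ht hpos => ?_
  have hmono := ((hsol.mono (Icc_subset_Icc_right ht.2)).strictMonoOn_strictAntiOn_Icc hK hθ0
    fun u hu => hpos u (Ioo_subset_Ico_self hu)).1
  exact hx0.trans_le (hmono.monotoneOn ⟨le_rfl, ht.1⟩ ⟨ht.1, le_rfl⟩ ht.1)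

theorem strictMonoOn_strictAntiOn {D : Set ℝ} (hD : IsInitialInterval D)
    (hsol : IsProfileSolution 𝔎 x θ D) (hK : ∀ y ∈ Icc (-1 : ℝ) 1, 𝔎 y < 0) (hx0 : 0 < x 0)
    (hθ0 : θ 0 = π / 2) : StrictMonoOn x D ∧ StrictAntiOn θ D := by
  have key : ∀ t ∈ D, StrictMonoOn x (Icc 0 t) ∧ StrictAntiOn θ (Icc 0 t) := fun t ht =>
    have hsolt := hsol.mono (hD.Icc_subset ht)
    hsolt.strictMonoOn_strictAntiOn_Icc hK hθ0 fun u hu =>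
      hsolt.pos_x_Icc hK hx0 hθ0 u (Ioo_subset_Icc_self hu)
  exact ⟨fun s hs t ht hst => (key t ht).1 ⟨hD.nonneg hs, hst.le⟩ ⟨hD.nonneg ht, le_rfl⟩ hst,
    fun s hs t ht hst => (key t ht).2 ⟨hD.nonneg hs, hst.le⟩ ⟨hD.nonneg ht, le_rfl⟩ hst⟩

theorem not_Ici {c₀ : ℝ} (hc₀ : c₀ < 0) (hle : ∀ y ∈ Icc (-1 : ℝ) 1, 𝔎 y ≤ c₀)
    (hx0 : 0 < x 0) (hθ0 : θ 0 = π / 2) : ¬ IsProfileSolution 𝔎 x θ (Ici 0) := by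
  intro hsol
  have hxmono := (hsol.strictMonoOn_strictAntiOn (Or.inl rfl)
    (fun y hy => (hle y hy).trans_lt hc₀) hx0 hθ0).1.monotoneOn
  set C := x 0 * c₀
  have hC : C < 0 := mul_neg_of_pos_of_neg hx0 hc₀
  have hθ' : ∀ t ∈ Ici (0 : ℝ), x t * 𝔎 (cos (θ t)) / sin (θ t) ≤ C := fun t ht => by
    obtain ⟨hxt, hθt, -, -⟩ := hsol t ht
    have hsin : 0 < sin (θ t) := sin_pos_of_pos_of_lt_pi hθt.1 hθt.2
    have h𝔎t : 𝔎 (cos (θ t)) ≤ c₀ := hle _ ⟨neg_one_le_cos _, cos_le_one _⟩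
    have hxx : x 0 ≤ x t := hxmono self_mem_Ici ht ht
    have hnum : x t * 𝔎 (cos (θ t)) ≤ C :=
      (mul_le_mul_of_nonneg_left h𝔎t hxt).trans (mul_le_mul_of_nonpos_right hxx hc₀.le)
    rw [div_le_iff₀ hsin]
    nlinarith [sin_le_one (θ t)]
  set T := θ 0 / -C
  have hT : 0 ≤ T := div_nonneg (by rw [hθ0]; positivity) (neg_nonneg.2 hC.le)
  have hCT : C * (T - 0) = -θ 0 := by
    simp only [T, sub_zero]
    field_simp [hC.ne]
  have hdrop := image_sub_le_mul_sub_of_hasDerivAt_le (convex_Ici 0)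
    (fun t ht => (hsol t ht).2.2.2) hθ' self_mem_Ici (mem_Ici.2 hT) hT
  linarith [(hsol T hT).2.1.1]

theorem exists_tendsto_nhdsLT {b : ℝ} (hsol : IsProfileSolution 𝔎 x θ (Ico 0 b)) (hb : 0 < b)
    (hx : StrictMonoOn x (Ico 0 b)) (hθ : StrictAntiOn θ (Ico 0 b)) :
    ∃ x₁ θ₁ : ℝ, x 0 < x₁ ∧ 0 ≤ θ₁ ∧ θ₁ < θ 0 ∧
      Tendsto x (𝓝[<] b) (𝓝 x₁) ∧ Tendsto θ (𝓝[<] b) (𝓝 θ₁) := by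
  have hxbdd : BddAbove (x '' Ico 0 b) := ⟨x 0 + b, forall_mem_image.2 fun t ht => by
    have := image_sub_le_mul_sub_of_hasDerivAt_le (convex_Ico 0 b) (fun t ht => (hsol t ht).2.2.1)
      (fun t _ => cos_le_one (θ t)) ⟨le_rfl, hb⟩ ht ht.1
    linarith [ht.2]⟩
  have hθbdd : BddAbove ((fun t => -θ t) '' Ico 0 b) :=
    ⟨0, forall_mem_image.2 fun t ht => neg_nonpos.2 (hsol t ht).2.1.1.le⟩
  obtain ⟨x₁, hx₁, hxt⟩ := hx.exists_lt_tendsto_nhdsLT hb hxbdd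
  obtain ⟨m, hm, hmt⟩ := hθ.neg.exists_lt_tendsto_nhdsLT hb hθbdd
  have hθt : Tendsto θ (𝓝[<] b) (𝓝 (-m)) := by simpa using hmt.neg
  refine ⟨x₁, -m, hx₁, ge_of_tendsto hθt ?_, by linarith, hxt, hθt⟩
  filter_upwards [Ico_mem_nhdsLT hb] with t ht using (hsol t ht).2.1.1.le

theorem exists_extension (h𝔎 : ContDiffOn ℝ 1 𝔎 (Icc (-1) 1)) {b x₁ θ₁ : ℝ}
    (hsol : IsProfileSolution 𝔎 x θ (Ico 0 b)) (hb : 0 < b) (hx₁ : 0 < x₁) (hθ₁ : θ₁ ∈ Ioo 0 π)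
    (hx : Tendsto x (𝓝[<] b) (𝓝 x₁)) (hθ : Tendsto θ (𝓝[<] b) (𝓝 θ₁)) :
    ∃ c > b, ∃ X Θ : ℝ → ℝ, EqOn x X (Ico 0 b) ∧ EqOn θ Θ (Ico 0 b) ∧
      IsProfileSolution 𝔎 X Θ (Ico 0 c) := by
  have hγ : ∀ t ∈ Ioo 0 b, HasDerivAt (fun t => (x t, θ t)) (profileField 𝔎 (x t, θ t)) t :=
    fun t ht => have h := hsol t (Ioo_subset_Ico_self ht); h.2.2.1.prodMk h.2.2.2
  obtain ⟨c, hbc, Γ, hΓ, hΓb, hΓ'⟩ :=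
    exists_extension_of_tendsto (contDiffAt_profileField h𝔎 hθ₁) hb hγ (hx.prodMk_nhds hθ)
  have hU : IsOpen {p : ℝ × ℝ | 0 < p.1 ∧ p.2 ∈ Ioo 0 π} :=
    (isOpen_lt continuous_const continuous_fst).inter <|
      (isOpen_lt continuous_const continuous_snd).inter (isOpen_lt continuous_snd continuous_const)
  obtain ⟨c', hbc', hc'⟩ := mem_nhdsGE_iff_exists_Ico_subset.1 <| nhdsWithin_le_nhds <|
    (hΓ' b ⟨hb, hbc⟩).continuousAt.eventually_mem (hU.mem_nhds (hΓb ▸ ⟨hx₁, hθ₁⟩))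
  refine ⟨min c c', lt_min hbc hbc', fun t => (Γ t).1, fun t => (Γ t).2,
    fun t ht => congrArg Prod.fst (hΓ ht.2).symm, fun t ht => congrArg Prod.snd (hΓ ht.2).symm,
    fun t ht => ?_⟩
  by_cases htb : t < b
  · have hΓt : Γ =ᶠ[𝓝 t] fun u => (x u, θ u) := eventuallyEq_of_mem (Iio_mem_nhds htb) hΓ
    obtain ⟨h0, hθt, hx', hθ'⟩ := hsol t ⟨ht.1, htb⟩
    simp only [hΓt.eq_of_nhds]
    exact ⟨h0, hθt, hx'.congr_of_eventuallyEq (hΓt.fun_comp Prod.fst),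
      hθ'.congr_of_eventuallyEq (hΓt.fun_comp Prod.snd)⟩
  · have hd := hΓ' t ⟨hb.trans_le (not_lt.1 htb), ht.2.trans_le (min_le_left _ _)⟩
    obtain ⟨h0, hθt⟩ : 0 < (Γ t).1 ∧ (Γ t).2 ∈ Ioo 0 π :=
      hc' ⟨not_lt.1 htb, ht.2.trans_le (min_le_right _ _)⟩
    exact ⟨h0.le, hθt, (ContinuousLinearMap.fst ℝ ℝ ℝ).hasFDerivAt.comp_hasDerivAt t hd,
      (ContinuousLinearMap.snd ℝ ℝ ℝ).hasFDerivAt.comp_hasDerivAt t hd⟩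

end IsProfileSolution

/-- For `𝔎 ∈ C¹([-1,1])` with `𝔎 ≤ c₀ < 0`, the maximal solution of the profile system
`x' = cos θ`, `θ' = x𝔎(cos θ)/sin θ` starting at `(x₀, π/2)`, `x₀ > 0`, has `x` strictly
increasing and `θ` strictly decreasing for `s > 0`, and as `s` tends to the (finite or
infinite) right endpoint of the maximal interval, `θ(s) → 0` and `x(s) → x₀¹` for some
finite `x₀¹ > x₀`. -/
theorem negative_K_orbit_behavior (𝔎 : ℝ → ℝ)
    (h𝔎 : ContDiffOn ℝ 1 𝔎 (Set.Icc (-1) 1))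
    (c₀ : ℝ) (hc₀ : c₀ < 0) (hle : ∀ y ∈ Set.Icc (-1:ℝ) 1, 𝔎 y ≤ c₀)
    (x₀ : ℝ) (hx₀ : 0 < x₀) (x θ : ℝ → ℝ) (D : Set ℝ)
    (hD : D = Set.Ici (0:ℝ) ∨ ∃ b : ℝ, 0 < b ∧ D = Set.Ico 0 b)
    (hsol : ∀ s ∈ D, 0 ≤ x s ∧ θ s ∈ Set.Ioo 0 π ∧
      HasDerivAt x (Real.cos (θ s)) s ∧
      HasDerivAt θ (x s * 𝔎 (Real.cos (θ s)) / Real.sin (θ s)) s)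
    (hinitx : x 0 = x₀) (hinitθ : θ 0 = π / 2)
    (hmax : ∀ (x' θ' : ℝ → ℝ) (D' : Set ℝ), D ⊆ D' →
      (D' = Set.Ici (0:ℝ) ∨ ∃ b : ℝ, 0 < b ∧ D' = Set.Ico 0 b) →
      (∀ s ∈ D', 0 ≤ x' s ∧ θ' s ∈ Set.Ioo 0 π ∧
        HasDerivAt x' (Real.cos (θ' s)) s ∧
        HasDerivAt θ' (x' s * 𝔎 (Real.cos (θ' s)) / Real.sin (θ' s)) s) →
      Set.EqOn x x' D → Set.EqOn θ θ' D → D' = D) :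
    StrictMonoOn x (D ∩ Set.Ioi 0) ∧ StrictAntiOn θ (D ∩ Set.Ioi 0) ∧
    ∃ l : Filter ℝ,
      (l = atTop ∨ ∃ s₀ : ℝ, 0 < s₀ ∧ l = nhdsWithin s₀ (Set.Iio s₀)) ∧
      Tendsto θ l (nhds 0) ∧ ∃ x₁ : ℝ, x₀ < x₁ ∧ Tendsto x l (nhds x₁) := by
  subst hinitx
  have hK : ∀ y ∈ Icc (-1 : ℝ) 1, 𝔎 y < 0 := fun y hy => (hle y hy).trans_lt hc₀
  obtain ⟨hxmono, hθanti⟩ := IsProfileSolution.strictMonoOn_strictAntiOn hD hsol hK hx₀ hinitθ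
  refine ⟨hxmono.mono inter_subset_left, hθanti.mono inter_subset_left, ?_⟩
  obtain ⟨b, hb, rfl⟩ : ∃ b, 0 < b ∧ D = Ico 0 b := hD.resolve_left <| by
    rintro rfl
    exact IsProfileSolution.not_Ici hc₀ hle hx₀ hinitθ hsol
  obtain ⟨x₁, θ₁, hx₁, hθ₁, hθ₁lt, hx, hθ⟩ :=
    IsProfileSolution.exists_tendsto_nhdsLT hsol hb hxmono hθanti
  refine ⟨𝓝[<] b, Or.inr ⟨b, hb, rfl⟩, ?_, x₁, hx₁, hx⟩
  obtain rfl | hθ₁pos := hθ₁.eq_or_lt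
  · exact hθ
  obtain ⟨c, hbc, X, Θ, hxX, hθΘ, hsolXΘ⟩ := IsProfileSolution.exists_extension h𝔎 hsol hb
    (hx₀.trans hx₁) ⟨hθ₁pos, by linarith [pi_pos]⟩ hx hθ
  have hcb := hmax X Θ (Ico 0 c) (Ico_subset_Ico_right hbc.le) (Or.inr ⟨c, hb.trans hbc, rfl⟩)
    hsolXΘ hxX hθΘ
  exact (lt_irrefl b (hcb ▸ ⟨hb.le, hbc⟩ : b ∈ Ico 0 b).2).elim
end
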